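/- Let A be the linear automaton over Σ = {a, b, c, d} with states q0, q1, q2, q3, initial state q0, Büchi-accepting state q3, and transitions q0 --a--> q0, q0 --b--> q0, q0 --a--> q1, q0 --b--> q2, q1 --c--> q3, q2 --d--> q3, q3 --a--> q3, q3 --b--> q3. Then no linear automaton A' is a 1-token ghost of A; in particular, the class of linear automata is not closed under 1-token ghost. -/

import Mathlib

/-- A labelled transition system over alphabet `Al`; `none` labels are ε-transitions.
`Acc` is the set of accepting infinite runs (as infinite sequences of transitions). -/
structure LTS (Al : Type) where
  St : Type
  init : St
  Tr : St → Option Al → St → Prop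
  Acc : (ℕ → St × Option Al × St) → Prop

namespace LTS

variable {Al : Type}

/-- `Path M q l q'` : the list `l` of transitions is a valid path of `M` from `q` to `q'`. -/
def Path (M : LTS Al) : M.St → List (M.St × Option Al × M.St) → M.St → Prop
  | q, [], q' => q = q'
  | q, t :: l, q' => t.1 = q ∧ M.Tr t.1 t.2.1 t.2.2 ∧ Path M t.2.2 l q'

/-- The finite word read along a list of transitions (ε-labels removed). -/
def wordOf {S : Type} (l : List (S × Option Al × S)) : List Al :=
  l.filterMap (fun t => t.2.1)

/-- A transition sequence over the single letter `σ` from `q` to `q'`: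
one `σ`-labelled transition together with finitely many ε-transitions. -/
def SeqOver (M : LTS Al) (q : M.St) (σ : Al) (l : List (M.St × Option Al × M.St))
    (q' : M.St) : Prop :=
  M.Path q l q' ∧ wordOf l = [σ]

/-- An infinite run of `M` from the initial state. -/
def IsRun (M : LTS Al) (ρ : ℕ → M.St × Option Al × M.St) : Prop :=
  (ρ 0).1 = M.init ∧ ∀ n, M.Tr (ρ n).1 (ρ n).2.1 (ρ n).2.2 ∧ (ρ (n + 1)).1 = (ρ n).2.2

/-- `ρ` is a (transition-)sequence on the infinite word `w`: the subsequence of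
non-ε labels of `ρ` is exactly `w`. -/
def RunOn {S : Type} (ρ : ℕ → S × Option Al × S) (w : ℕ → Al) : Prop :=
  ∃ φ : ℕ → ℕ, StrictMono φ ∧ (∀ i, (ρ (φ i)).2.1 = some (w i)) ∧
    ∀ n, (ρ n).2.1 ≠ none → ∃ i, φ i = n

/-- The language of infinite words of `M`. -/
def Lang (M : LTS Al) : Set (ℕ → Al) :=
  { w | ∃ ρ, M.IsRun ρ ∧ RunOn ρ w ∧ M.Acc ρ }

/-- `ρ` is the concatenation of the blocks `ms`. -/
def IsFlatten {T : Type} (ms : ℕ → List T) (ρ : ℕ → T) : Prop :=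
  ∃ b : ℕ → ℕ, b 0 = 0 ∧ (∀ i, b (i + 1) = b i + (ms i).length) ∧
    ∀ i j (h : j < (ms i).length), ρ (b i + j) = (ms i).get ⟨j, h⟩

/-- The concatenation of the blocks `ms` is an accepting run-sequence of `M`. -/
def FlatAcc (M : LTS Al) (ms : ℕ → List (M.St × Option Al × M.St)) : Prop :=
  ∃ ρ, IsFlatten ms ρ ∧ M.Acc ρ

/-- The moves `em` (one transition sequence per round) form a run of `M` from the
initial state on the letters `w`. -/
def ValidMoves (M : LTS Al) (w : ℕ → Al) (em : ℕ → List (M.St × Option Al × M.St)) : Prop :=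
  ∃ q : ℕ → M.St, q 0 = M.init ∧ ∀ i, M.SeqOver (q i) (w i) (em i) (q (i + 1))

/-- `B.Simulates M` : Eve (playing in `B`) has a winning strategy in the simulation game
`Sim(B, M)` against Adam (playing in `M`): in each round Adam picks a letter and a
transition sequence in `M` over it, then Eve picks a transition sequence in `B` over it;
Eve wins if her run is accepting or Adam's run is rejecting. -/
def Simulates (B M : LTS Al) : Prop :=
  ∃ st : List (Al × List (M.St × Option Al × M.St)) → List (B.St × Option Al × B.St),
    ∀ am : ℕ → Al × List (M.St × Option Al × M.St),
      M.ValidMoves (fun i => (am i).1) (fun i => (am i).2) →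
        ¬ M.FlatAcc (fun i => (am i).2) ∨
          (B.ValidMoves (fun i => (am i).1)
              (fun i => st (List.ofFn fun j : Fin (i + 1) => am j.1)) ∧
            B.FlatAcc (fun i => st (List.ofFn fun j : Fin (i + 1) => am j.1)))

/-- `M.HD` : Eve has a winning strategy in the letter game on `M`
(history-determinism): Adam picks letters, Eve picks transition sequences, and Eve
wins if the word is not in the language of `M` or her run is accepting. -/
def HD (M : LTS Al) : Prop :=
  ∃ st : List Al → List (M.St × Option Al × M.St),
    ∀ w : ℕ → Al, w ∈ M.Lang →
      M.ValidMoves w (fun i => st (List.ofFn fun j : Fin (i + 1) => w j.1)) ∧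
      M.FlatAcc (fun i => st (List.ofFn fun j : Fin (i + 1) => w j.1))

/-- `G1Win B M` : Eve (playing in `B`) has a winning strategy in the one-token game
`G1(B, M)` against Adam (playing in `M`): in each round Adam picks a letter, Eve picks a
transition sequence in `B` over it, then Adam picks a transition sequence in `M` over it;
Eve wins if her run is accepting or Adam's run is rejecting. -/
def G1Win (B M : LTS Al) : Prop :=
  ∃ st : List (Al × List (M.St × Option Al × M.St)) → Al → List (B.St × Option Al × B.St),
    ∀ am : ℕ → Al × List (M.St × Option Al × M.St),
      M.ValidMoves (fun i => (am i).1) (fun i => (am i).2) →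
        B.ValidMoves (fun i => (am i).1)
          (fun i => st (List.ofFn fun j : Fin i => am j.1) (am i).1) ∧
        (B.FlatAcc (fun i => st (List.ofFn fun j : Fin i => am j.1) (am i).1) ∨
          ¬ M.FlatAcc (fun i => (am i).2))

/-- `B` is a 1-token ghost of `M`. -/
def Ghost1 (B M : LTS Al) : Prop := B.Lang = M.Lang ∧ G1Win B M

/-- `M` is guidable with respect to the class `C` : `M` simulates every member of `C`
whose language is contained in that of `M`. -/
def Guidable (M : LTS Al) (C : Set (LTS Al)) : Prop :=
  ∀ B ∈ C, B.Lang ⊆ M.Lang → M.Simulates B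

/-- A deterministic LTS: no ε-transitions and at most one transition per state and letter. -/
def Deterministic (M : LTS Al) : Prop :=
  (∀ q q', ¬ M.Tr q none q') ∧
    ∀ q a q₁ q₂, M.Tr q (some a) q₁ → M.Tr q (some a) q₂ → q₁ = q₂

end LTS

/-- A Büchi automaton over alphabet `Al`: no ε-transitions, accepting states `F`
(finiteness of the state space is stated separately). -/
structure Buchi (Al : Type) where
  Q : Type
  init : Q
  Tr : Q → Al → Q → Prop
  F : Set Q

namespace Buchi

variable {Al : Type}

/-- The LTS induced by a Büchi automaton: an infinite run is accepting iff it visits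
accepting states infinitely often. -/
def toLTS (B : Buchi Al) : LTS Al where
  St := B.Q
  init := B.init
  Tr := fun q x q' => ∃ σ, x = some σ ∧ B.Tr q σ q'
  Acc := fun ρ => ∀ N, ∃ n ≥ N, (ρ n).1 ∈ B.F

/-- `BPath B q l q'` : the list `l` of letter-labelled transitions is a path from `q` to `q'`. -/
def BPath (B : Buchi Al) : B.Q → List (B.Q × Al × B.Q) → B.Q → Prop
  | q, [], q' => q = q'
  | q, t :: l, q' => t.1 = q ∧ B.Tr t.1 t.2.1 t.2.2 ∧ BPath B t.2.2 l q'

/-- A linear (very weak) automaton: every cycle is a self-loop. -/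
def IsLinear (B : Buchi Al) : Prop :=
  ∀ q l, l ≠ [] → B.BPath q l q → ∀ t ∈ l, t.1 = q ∧ t.2.2 = q

end Buchi

/-- The four-letter alphabet `{a, b, c, d}`. -/
inductive ABCD where
  | a | b | c | d
deriving DecidableEq

open ABCD

/-- The linear automaton of Figure 2: states `q0, q1, q2, q3` (as `Fin 4`), initial state
`q0`, Büchi-accepting state `q3`, with transitions
`q0 -a,b-> q0`, `q0 -a-> q1`, `q0 -b-> q2`, `q1 -c-> q3`, `q2 -d-> q3`, `q3 -a,b-> q3`. -/
def exA : Buchi ABCD where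
  Q := Fin 4
  init := 0
  Tr := fun q x q' =>
    (q = 0 ∧ q' = 0 ∧ (x = a ∨ x = b)) ∨
    (q = 0 ∧ q' = 1 ∧ x = a) ∨
    (q = 0 ∧ q' = 2 ∧ x = b) ∨
    (q = 1 ∧ q' = 3 ∧ x = c) ∨
    (q = 2 ∧ q' = 3 ∧ x = d) ∨
    (q = 3 ∧ q' = 3 ∧ (x = a ∨ x = b))
  F := {3}

/-!
Let Adam read `(ab)^ω` while staying in `q0`. Eve answers with a run of the finite linear
automaton `A'`, which is eventually constant, so at some even round `n` she takes an `a`-labelled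
self-loop. Now let Adam deviate at round `n`: he reads `a` into `q1`, then `c` into `q3`, then `a^ω`,
an accepting run. Up to round `n` Eve has seen the same history, so her run, which must now be
accepting, still takes that self-loop at round `n`. Removing the loop gives an accepting run of `A'`
on `(ab)^(n/2) c a^ω`, which `A` rejects because in `A` a `c` never follows a `b`.
-/

def Nat.succAbove (n k : ℕ) : ℕ := if k < n then k else k + 1

namespace LTS

variable {Al : Type}

theorem isFlatten_singleton_iff {T : Type} {f ρ : ℕ → T} :
    IsFlatten (fun i => [f i]) ρ ↔ ρ = f := by
  constructor
  · rintro ⟨b, hb0, hbs, hget⟩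
    have hb : ∀ i, b i = i := fun i => by
      induction i with
      | zero => exact hb0
      | succ i ih => rw [hbs, ih]; rfl
    funext i
    simpa [hb] using hget i 0 (by simp)
  · rintro rfl
    exact ⟨id, rfl, fun _ => rfl, fun i j hj => by
      obtain rfl : j = 0 := by simpa using hj
      rfl⟩

theorem flatAcc_singleton_iff (M : LTS Al) {f : ℕ → M.St × Option Al × M.St} :
    M.FlatAcc (fun i => [f i]) ↔ M.Acc f := by
  simp only [FlatAcc, isFlatten_singleton_iff, exists_eq_left]

end LTS

namespace Buchi

variable {Al : Type}

def IsRunOn (B : Buchi Al) (w : ℕ → Al) (q : ℕ → B.Q) : Prop :=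
  q 0 = B.init ∧ ∀ i, B.Tr (q i) (w i) (q (i + 1))

def IsAccepting (B : Buchi Al) (q : ℕ → B.Q) : Prop :=
  ∀ N, ∃ n ≥ N, q n ∈ B.F

def runSteps {S : Type} (w : ℕ → Al) (q : ℕ → S) (i : ℕ) : List (S × Option Al × S) :=
  [(q i, some (w i), q (i + 1))]

def play {S : Type} (w : ℕ → Al) (q : ℕ → S) (i : ℕ) : Al × List (S × Option Al × S) :=
  (w i, runSteps w q i)

theorem ofFn_play_congr {S : Type} {w w' : ℕ → Al} {p p' : ℕ → S} {i : ℕ}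
    (hw : ∀ j < i, w j = w' j) (hp : ∀ j ≤ i, p j = p' j) :
    (List.ofFn fun j : Fin i => play w p j) = List.ofFn fun j : Fin i => play w' p' j := by
  congr 1
  funext j
  simp only [play, runSteps, hw j j.2, hp j j.2.le, hp (j + 1) j.2]

variable {B : Buchi Al}

theorem seqOver_iff {q q' : B.Q} {σ : Al} {l : List (B.Q × Option Al × B.Q)} :
    B.toLTS.SeqOver q σ l q' ↔ l = [(q, some σ, q')] ∧ B.Tr q σ q' := by
  constructor
  · rintro ⟨hp, hw⟩
    change List.filterMap (fun t : B.Q × Option Al × B.Q => t.2.1) l = [σ] at hw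
    match l, hp, hw with
    | [], _, hw => simp at hw
    | [(_, _, _)], ⟨rfl, ⟨τ, rfl, htr⟩, rfl⟩, hw =>
      obtain rfl : τ = σ := by simpa using hw
      exact ⟨rfl, htr⟩
    | (_, _, _) :: (_, _, _) :: _, ⟨_, ⟨_, rfl, _⟩, _, ⟨_, rfl, _⟩, _⟩, hw => simp at hw
  · rintro ⟨rfl, h⟩
    exact ⟨⟨rfl, ⟨σ, rfl, h⟩, rfl⟩, rfl⟩

theorem validMoves_iff {w : ℕ → Al} {em : ℕ → List (B.Q × Option Al × B.Q)} :
    B.toLTS.ValidMoves w em ↔ ∃ q, B.IsRunOn w q ∧ em = runSteps w q := by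
  constructor
  · rintro ⟨q, h0, hq⟩
    exact ⟨q, ⟨h0, fun i => (seqOver_iff.1 (hq i)).2⟩, funext fun i => (seqOver_iff.1 (hq i)).1⟩
  · rintro ⟨q, ⟨h0, hq⟩, rfl⟩
    exact ⟨q, h0, fun i => seqOver_iff.2 ⟨rfl, hq i⟩⟩

theorem flatAcc_runSteps_iff {w : ℕ → Al} {q : ℕ → B.Q} :
    B.toLTS.FlatAcc (runSteps w q) ↔ B.IsAccepting q :=
  LTS.flatAcc_singleton_iff _

theorem mem_lang_iff {w : ℕ → Al} :
    w ∈ B.toLTS.Lang ↔ ∃ q, B.IsRunOn w q ∧ B.IsAccepting q := by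
  constructor
  · rintro ⟨ρ, ⟨hinit, hstep⟩, ⟨φ, hφ, hlab, hsurj⟩, hacc⟩
    have hφ_id : ∀ n, φ n = n := by
      have hsurj' : Function.Surjective φ := fun n =>
        hsurj n (by obtain ⟨σ, hσ, -⟩ := (hstep n).1; simp [hσ])
      exact congrFun (congrArg DFunLike.coe
        (Subsingleton.elim (hφ.orderIsoOfSurjective φ hsurj') (OrderIso.refl ℕ)))
    refine ⟨fun n => (ρ n).1, ⟨hinit, fun n => ?_⟩, hacc⟩
    obtain ⟨σ, hσ, htr⟩ := (hstep n).1
    obtain rfl : σ = w n := by simpa [hφ_id, hσ] using hlab n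
    change B.Tr (ρ n).1 (w n) (ρ (n + 1)).1
    rwa [(hstep n).2]
  · rintro ⟨q, ⟨h0, hq⟩, hacc⟩
    exact ⟨fun n => (q n, some (w n), q (n + 1)), ⟨h0, fun n => ⟨⟨w n, rfl, hq n⟩, rfl⟩⟩,
      ⟨id, strictMono_id, fun _ => rfl, fun n _ => ⟨n, rfl⟩⟩, hacc⟩

section Rank

variable (r : B.Q → ℕ)

theorem rank_le_of_bPath (hr : ∀ q σ q', B.Tr q σ q' → q = q' ∨ r q < r q')
    {q q' : B.Q} {l : List (B.Q × Al × B.Q)} (h : B.BPath q l q') : r q ≤ r q' := by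
  induction l generalizing q with
  | nil => exact (congrArg r h).le
  | cons t l ih =>
    obtain ⟨rfl, htr, hl⟩ := h
    rcases hr _ _ _ htr with heq | hlt
    · exact heq ▸ ih hl
    · exact hlt.le.trans (ih hl)

theorem selfLoop_of_bPath_of_rank_le (hr : ∀ q σ q', B.Tr q σ q' → q = q' ∨ r q < r q')
    {q q' : B.Q} {l : List (B.Q × Al × B.Q)} (h : B.BPath q l q') (hle : r q' ≤ r q) :
    ∀ t ∈ l, t.1 = q ∧ t.2.2 = q := by
  induction l generalizing q with
  | nil => simp
  | cons t l ih =>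
    obtain ⟨rfl, htr, hl⟩ := h
    have heq : t.1 = t.2.2 := (hr _ _ _ htr).resolve_right
      fun hlt => (hlt.trans_le ((rank_le_of_bPath r hr hl).trans hle)).false
    rintro s (_ | ⟨_, hs⟩)
    · exact ⟨rfl, heq.symm⟩
    · exact heq ▸ ih hl (heq ▸ hle) s hs

theorem isLinear_of_rank (hr : ∀ q σ q', B.Tr q σ q' → q = q' ∨ r q < r q') : B.IsLinear :=
  fun _ _ _ h => selfLoop_of_bPath_of_rank_le r hr h le_rfl

end Rank

section Linear

variable {w : ℕ → Al} {q : ℕ → B.Q}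

theorem bPath_range' (hq : ∀ i, B.Tr (q i) (w i) (q (i + 1))) (m k : ℕ) :
    B.BPath (q m) ((List.range' m k).map fun j => (q j, w j, q (j + 1))) (q (m + k)) := by
  induction k generalizing m with
  | zero => rfl
  | succ k ih =>
    refine ⟨rfl, hq m, ?_⟩
    simpa only [Nat.add_right_comm m 1 k, Nat.add_assoc] using ih (m + 1)

theorem IsLinear.selfLoop_of_eq (hB : B.IsLinear) (hq : ∀ i, B.Tr (q i) (w i) (q (i + 1)))
    {m n : ℕ} (hmn : m < n) (heq : q m = q n) : q (m + 1) = q m := by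
  have hpath := bPath_range' hq m (n - m)
  rw [Nat.add_sub_cancel' hmn.le, ← heq] at hpath
  have hmem : (q m, w m, q (m + 1)) ∈ (List.range' m (n - m)).map fun j => (q j, w j, q (j + 1)) :=
    List.mem_map.2 ⟨m, List.mem_range'_1.2 ⟨le_rfl, by omega⟩, rfl⟩
  exact (hB _ _ (List.ne_nil_of_mem hmem) hpath _ hmem).2

theorem IsLinear.eventually_selfLoop [Finite B.Q] (hB : B.IsLinear)
    (hq : ∀ i, B.Tr (q i) (w i) (q (i + 1))) :
    ∃ N, ∀ n ≥ N, q (n + 1) = q n := by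
  have hinj : Set.InjOn q {n | q (n + 1) ≠ q n} := by
    intro m hm n hn heq
    by_contra hne
    rcases Nat.lt_or_gt_of_ne hne with h | h
    · exact hm (hB.selfLoop_of_eq hq h heq)
    · exact hn (hB.selfLoop_of_eq hq h heq.symm)
  obtain ⟨N, hN⟩ := (Set.Finite.of_injOn (Set.mapsTo_univ _ _) hinj Set.finite_univ).bddAbove
  exact ⟨N + 1, fun n hn => by_contra fun h => absurd (hN h) (by omega)⟩

end Linear

theorem IsRunOn.comp_succAbove {w : ℕ → Al} {q : ℕ → B.Q} (hq : B.IsRunOn w q) {n : ℕ}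
    (hloop : q (n + 1) = q n) : B.IsRunOn (w ∘ n.succAbove) (q ∘ n.succAbove) := by
  refine ⟨?_, fun k => ?_⟩
  · rcases Nat.eq_zero_or_pos n with rfl | hn
    · simpa [Nat.succAbove, hloop] using hq.1
    · simpa [Nat.succAbove, hn] using hq.1
  · rcases lt_trichotomy (k + 1) n with h | h | h
    · simpa [Nat.succAbove, h, (Nat.lt_succ_self k).trans h] using hq.2 k
    · subst h
      simpa [Nat.succAbove, hloop] using hq.2 k
    · simpa [Nat.succAbove, show ¬ k < n by omega, show ¬ k + 1 < n by omega] using hq.2 (k + 1)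

theorem IsAccepting.comp_succAbove {q : ℕ → B.Q} (hq : B.IsAccepting q) (n : ℕ) :
    B.IsAccepting (q ∘ n.succAbove) := by
  intro N
  obtain ⟨m, hm, hF⟩ := hq (N + n + 1)
  refine ⟨m - 1, by omega, ?_⟩
  simpa [Nat.succAbove, show ¬ m - 1 < n by omega, show m - 1 + 1 = m by omega] using hF

theorem exists_run_of_g1Strategy {A : Buchi Al}
    {st : List (Al × List (A.Q × Option Al × A.Q)) → Al → List (B.Q × Option Al × B.Q)}
    (hst : ∀ am : ℕ → Al × List (A.Q × Option Al × A.Q),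
      A.toLTS.ValidMoves (fun i => (am i).1) (fun i => (am i).2) →
        B.toLTS.ValidMoves (fun i => (am i).1)
          (fun i => st (List.ofFn fun j : Fin i => am j.1) (am i).1) ∧
        (B.toLTS.FlatAcc (fun i => st (List.ofFn fun j : Fin i => am j.1) (am i).1) ∨
          ¬ A.toLTS.FlatAcc (fun i => (am i).2)))
    {w : ℕ → Al} {p : ℕ → A.Q} (hp : A.IsRunOn w p) :
    ∃ q, B.IsRunOn w q ∧ (∀ i, st (List.ofFn fun j : Fin i => play w p j) (w i) = runSteps w q i) ∧
      (A.IsAccepting p → B.IsAccepting q) := by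
  obtain ⟨hv, hwin⟩ := hst (play w p) (validMoves_iff.2 ⟨p, hp, rfl⟩)
  obtain ⟨q, hq, heve⟩ := validMoves_iff.1 hv
  refine ⟨q, hq, congrFun heve, fun hacc => ?_⟩
  rw [heve] at hwin
  exact flatAcc_runSteps_iff.1 (hwin.resolve_right (not_not_intro (flatAcc_runSteps_iff.2 hacc)))

end Buchi

open Buchi

theorem exA_isLinear : exA.IsLinear := by
  refine isLinear_of_rank ![0, 1, 1, 2] fun q σ q' h => ?_
  rcases h with ⟨rfl, rfl, -⟩ | ⟨rfl, rfl, -⟩ | ⟨rfl, rfl, -⟩ | ⟨rfl, rfl, -⟩ | ⟨rfl, rfl, -⟩ |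
    ⟨rfl, rfl, -⟩
  all_goals first | exact Or.inl rfl | exact Or.inr (by decide)

theorem exA_no_c_after_b {p q r : Fin 4} (hb : exA.Tr p b q) (hc : exA.Tr q c r) : False := by
  obtain rfl : q = 1 := by
    rcases hc with ⟨-, -, h⟩ | ⟨-, -, h⟩ | ⟨-, -, h⟩ | ⟨h, -, -⟩ | ⟨-, -, h⟩ | ⟨-, -, h⟩ <;>
      first | exact h | simp at h
  rcases hb with ⟨-, h, -⟩ | ⟨-, -, h⟩ | ⟨-, h, -⟩ | ⟨-, -, h⟩ | ⟨-, -, h⟩ | ⟨-, h, -⟩ <;>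
    simp at h

def alternating (k : ℕ) : ABCD := if k % 2 = 0 then a else b

def deviation (n i : ℕ) : ABCD := if i ≤ n then alternating i else if i = n + 1 then c else a

def deviationRun (n i : ℕ) : Fin 4 := if i ≤ n then 0 else if i = n + 1 then 1 else 3

theorem deviation_of_le {n i : ℕ} (h : i ≤ n) : deviation n i = alternating i := if_pos h

theorem deviationRun_of_le {n i : ℕ} (h : i ≤ n) : deviationRun n i = 0 := if_pos h

theorem exA_isRunOn_alternating : exA.IsRunOn alternating fun _ => (0 : Fin 4) := by
  refine ⟨rfl, fun i => ?_⟩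
  simp only [exA, alternating]
  split_ifs <;> simp

theorem exA_isRunOn_deviation {n : ℕ} (hn : n % 2 = 0) :
    exA.IsRunOn (deviation n) (deviationRun n) := by
  refine ⟨rfl, fun i => ?_⟩
  rcases lt_trichotomy i n with h | rfl | h
  · rw [deviation_of_le h.le, deviationRun_of_le h.le, deviationRun_of_le h]
    exact exA_isRunOn_alternating.2 i
  · simp [exA, deviation, deviationRun, alternating, hn]
  · rcases Nat.eq_or_lt_of_le h with rfl | h
    · simp [exA, deviation, deviationRun]
    · simp [exA, deviation, deviationRun, show ¬ i < n by omega, show i ≠ n by omega,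
        show ¬ i ≤ n by omega, show i ≠ n + 1 by omega]

theorem exA_isAccepting_deviationRun (n : ℕ) : exA.IsAccepting (deviationRun n) := fun N =>
  ⟨N + n + 2, by omega, by
    simp only [deviationRun, if_neg (show ¬ N + n + 2 ≤ n by omega),
      if_neg (show N + n + 2 ≠ n + 1 by omega)]
    rfl⟩

theorem deviation_comp_succAbove_not_mem_lang {n : ℕ} (hn : n % 2 = 0) (h2 : 2 ≤ n) :
    deviation n ∘ n.succAbove ∉ exA.toLTS.Lang := by
  intro hmem
  obtain ⟨p, ⟨-, hp⟩, -⟩ := mem_lang_iff.1 hmem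
  have hb := hp (n - 1)
  have hc := hp n
  rw [show n - 1 + 1 = n by omega] at hb
  have e1 : (deviation n ∘ n.succAbove) (n - 1) = b := by
    simp [Nat.succAbove, deviation, alternating, show n - 1 < n by omega, show (n - 1) % 2 ≠ 0 by omega]
  have e2 : (deviation n ∘ n.succAbove) n = c := by simp [Nat.succAbove, deviation]
  rw [e1] at hb
  rw [e2] at hc
  exact exA_no_c_after_b hb hc

/-- The automaton `exA` is linear, and no linear automaton is a 1-token
ghost of it; in particular, the class of linear automata is not closed under 1-token
ghost. -/
theorem linear_not_closed_under_one_token_ghost :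
    exA.IsLinear ∧
    ∀ A' : Buchi ABCD, Finite A'.Q → A'.IsLinear →
      ¬ LTS.Ghost1 A'.toLTS exA.toLTS := by
  refine ⟨exA_isLinear, fun A' _ hA' ⟨hLang, st, hst⟩ => ?_⟩
  obtain ⟨q, hq, hq_st, -⟩ := exists_run_of_g1Strategy hst exA_isRunOn_alternating
  obtain ⟨N, hN⟩ := hA'.eventually_selfLoop hq.2
  -- `n` is even, so `alternating` reads `b` at `n - 1` and `a` at `n`.
  set n := 2 * N + 2
  obtain ⟨q', hq', hq'_st, hacc⟩ :=
    exists_run_of_g1Strategy hst (exA_isRunOn_deviation (n := n) (by omega))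
  -- Both plays have the same history up to round `n`, so Eve answers both alike.
  have hagree : runSteps (deviation n) q' n = runSteps alternating q n := by
    rw [← hq'_st, ← hq_st]
    exact congrArg₂ st (ofFn_play_congr (fun j hj => deviation_of_le hj.le)
      (fun j hj => deviationRun_of_le hj)) (deviation_of_le le_rfl)
  have hloop : q' (n + 1) = q' n := by
    simp only [runSteps, List.cons.injEq, Prod.mk.injEq, and_true] at hagree
    obtain ⟨hn, -, hn1⟩ := hagree
    rw [hn1, hn, hN n (by omega)]
  have hmem := mem_lang_iff.2
    ⟨_, hq'.comp_succAbove hloop, (hacc (exA_isAccepting_deviationRun n)).comp_succAbove n⟩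
  rw [hLang] at hmem
  exact deviation_comp_succAbove_not_mem_lang (by omega) (by omega) hmem
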